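/- arXiv:2005.00252 — 2 statements merged into one kernel-verified Lean document; each statement's English description precedes it below -/
import Mathlib

section
/- Let f : ℝ → ℝ be integrable and monotone increasing, r > 0, Δt ≥ 2r, and a : Fin S → ℝ an AoI vector. Define h(i) as in S-AUS (average AoI cost over [t₀, t₀+Δt] when node i is visited). If i* maximizes a, i.e., a(i) ≤ a(i*) for all i, then h(i*) ≤ h(i) for all i. -/
/-!
Removing the summand of node `i` and adding its round-trip term changes the total cost by
`-∫_{a i + 2r}^{a i + Δt} f`. For monotone `f` this integral over a window of fixed length grows
with its position, so the saving is largest for the node of largest age.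
-/

open MeasureTheory Finset

theorem Monotone.monotone_integral_translate {f : ℝ → ℝ} (hf : Monotone f) {u v : ℝ}
    (huv : u ≤ v) : Monotone fun c => ∫ x in (c + u)..(c + v), f x := by
  intro c d hcd
  simp only [← intervalIntegral.integral_comp_add_left]
  exact intervalIntegral.integral_mono_on huv
    (hf.comp (monotone_id.const_add c)).intervalIntegrable
    (hf.comp (monotone_id.const_add d)).intervalIntegrable
    fun x _ => hf (by simpa using hcd)

theorem stmt_2_general (S : ℕ) (f : ℝ → ℝ)
    (hf : Monotone f)
    (r Δt : ℝ) (hr : 0 < r) (hΔt : 2 * r ≤ Δt)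
    (a : Fin S → ℝ) (h : Fin S → ℝ)
    (hdef : ∀ i : Fin S, h i =
      (1 / Δt) * ((∑ s ∈ Finset.univ.erase i, ∫ x in (a s)..(a s + Δt), f x)
        + (∫ x in (a i)..(a i + 2 * r), f x)
        + ∫ x in r..(Δt - r), f x))
    (istar : Fin S) (hmax : ∀ i : Fin S, a i ≤ a istar) :
    ∀ i : Fin S, h istar ≤ h i := by
  intro i
  have hΔt_nonneg : 0 ≤ Δt := by linarith
  have cost_eq : ∀ j, h j = 1 / Δt * ((∑ s, ∫ x in (a s)..(a s + Δt), f x)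
      + (∫ x in r..(Δt - r), f x) - ∫ x in (a j + 2 * r)..(a j + Δt), f x) := by
    intro j
    have tail_eq : (∫ x in (a j)..(a j + Δt), f x) - (∫ x in (a j)..(a j + 2 * r), f x)
        = ∫ x in (a j + 2 * r)..(a j + Δt), f x :=
      intervalIntegral.integral_interval_sub_left hf.intervalIntegrable hf.intervalIntegrable
    rw [hdef, sum_erase_eq_sub (mem_univ j), ← tail_eq]
    ring
  rw [cost_eq, cost_eq]
  gcongr
  exact hf.monotone_integral_translate hΔt (hmax i)

/-- Lemma 2 of the paper: in S-AUS, visiting the node with largest AoI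
minimizes the average AoI cost of a single trip. -/
theorem stmt_2 (S : ℕ) (f : ℝ → ℝ)
    (hfint : ∀ x y : ℝ, IntervalIntegrable f volume x y) (hf : Monotone f)
    (r Δt : ℝ) (hr : 0 < r) (hΔt : 2 * r ≤ Δt)
    (a : Fin S → ℝ) (h : Fin S → ℝ)
    (hdef : ∀ i : Fin S, h i =
      (1 / Δt) * ((∑ s ∈ Finset.univ.erase i, ∫ x in (a s)..(a s + Δt), f x)
        + (∫ x in (a i)..(a i + 2 * r), f x)
        + ∫ x in r..(Δt - r), f x))
    (istar : Fin S) (hmax : ∀ i : Fin S, a i ≤ a istar) :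
    ∀ i : Fin S, h istar ≤ h i :=
  stmt_2_general S f hf r Δt hr hΔt a h hdef istar hmax
end

section
/- Let G = (N, E) be a simple graph on S vertices, and define travel times t(i,j) = 4 if {i,j} ∈ E, t(i,j) = 16 otherwise, and t(0,s) = 8 for the base station 0 to every vertex s. Then G has a Hamiltonian path if and only if there exists a tour starting and ending at 0 that visits every vertex of N exactly once with total travel time at most 4S + 12. -/
/-!
Every list of `S` vertices has `S - 1` consecutive steps, each costing at least `4`, and a step
costs exactly `4` precisely when it follows an edge. So the steps of an ordering of the vertices
cost at most `4 (S - 1)` in total iff the ordering is a Hamiltonian path; adding the two legs of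
cost `8` to and from the base station turns the bound `4 (S - 1)` into `4S + 12`.
-/

namespace HamiltonianTour

variable {α : Type*} (R : α → α → Prop) [DecidableRel R]

def stepCost (a b : α) : ℕ := if R a b then 4 else 16

def pathCost (l : List α) : ℕ := ((l.zip l.tail).map (fun p => stepCost R p.1 p.2)).sum

variable {R}

lemma four_le_stepCost (a b : α) : 4 ≤ stepCost R a b := by
  unfold stepCost; split <;> omega

lemma stepCost_le_four_iff {a b : α} : stepCost R a b ≤ 4 ↔ R a b := by
  unfold stepCost; split <;> simp_all

@[simp]
lemma pathCost_nil : pathCost R [] = 0 := rfl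

@[simp]
lemma pathCost_singleton (a : α) : pathCost R [a] = 0 := rfl

@[simp]
lemma pathCost_cons_cons (a b : α) (l : List α) :
    pathCost R (a :: b :: l) = stepCost R a b + pathCost R (b :: l) := by
  simp [pathCost]

lemma four_mul_length_sub_one_le_pathCost (l : List α) : 4 * (l.length - 1) ≤ pathCost R l := by
  induction l with
  | nil => simp
  | cons a l ih =>
    cases l with
    | nil => simp
    | cons b l =>
      have := four_le_stepCost (R := R) a b
      simp only [pathCost_cons_cons, List.length_cons] at ih ⊢
      omega

lemma pathCost_le_iff_isChain (l : List α) :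
    pathCost R l ≤ 4 * (l.length - 1) ↔ l.IsChain R := by
  induction l with
  | nil => simp
  | cons a l ih =>
    cases l with
    | nil => simp
    | cons b l =>
      have hstep := four_le_stepCost (R := R) a b
      have hrest := four_mul_length_sub_one_le_pathCost (R := R) (b :: l)
      rw [List.isChain_cons_cons, ← stepCost_le_four_iff (R := R), ← ih, pathCost_cons_cons]
      simp only [List.length_cons] at hrest ⊢
      omega

end HamiltonianTour

lemma List.Nodup.length_eq_card {α : Type*} [Fintype α] {l : List α} (hl : l.Nodup)
    (hmem : ∀ a, a ∈ l) : l.length = Fintype.card α := by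
  classical
  simpa using Fintype.card_congr (hl.getEquivOfForallMemList l hmem)

open HamiltonianTour in
/-- Core equivalence of the NP-hardness reduction (Theorem 1): with travel times
`4` on edges, `16` on non-edges, and `8` between the base station and any node,
`G` has a Hamiltonian path iff there is a tour from the base station visiting every
vertex exactly once with total travel time at most `4S + 12`. -/
theorem stmt_7 (S : ℕ) (hS : 1 ≤ S) (G : SimpleGraph (Fin S)) [DecidableRel G.Adj] :
    (∃ l : List (Fin S), l.Nodup ∧ (∀ v, v ∈ l) ∧ l.Chain' G.Adj) ↔
    (∃ l : List (Fin S), l.Nodup ∧ (∀ v, v ∈ l) ∧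
      8 + ((l.zip l.tail).map (fun p => if G.Adj p.1 p.2 then (4 : ℕ) else 16)).sum + 8
        ≤ 4 * S + 12) := by
  refine exists_congr fun l => and_congr_right fun hl => and_congr_right fun hmem => ?_
  change l.IsChain G.Adj ↔ 8 + pathCost G.Adj l + 8 ≤ _
  rw [← pathCost_le_iff_isChain, hl.length_eq_card hmem, Fintype.card_fin]
  omega
end
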